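/- arXiv:2401.03528 — 2 statements merged into one kernel-verified Lean document; each statement's English description precedes it below -/
import Mathlib

section
/- Let S be an irreducible variety, W ⊆ S an irreducible subvariety, V ⊆ W an irreducible subvariety, and Z ⊆ S an irreducible subvariety such that every irreducible component Z' of Z ∩ W satisfies dim(Z') = dim(Z) + dim(W) − dim(S). If C is an irreducible component of Z ∩ V with codim_Z(C) < codim_S(V), then there exists an irreducible component Z' of Z ∩ W such that C is an irreducible component of Z' ∩ V and codim_{Z'}(C) < codim_W(V). -/
/-- Any irreducible subset of a set `A` is contained in a maximal irreducible
subset of `A`. -/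
theorem exists_maximal_irreducible_subset {S : Type*} [TopologicalSpace S]
    (A C : Set S) (hC : IsIrreducible C) (hCA : C ⊆ A) :
    ∃ Z', C ⊆ Z' ∧ Maximal (fun t => IsIrreducible t ∧ t ⊆ A) Z' := by
  obtain ⟨m, hCm, hm⟩ :=
    zorn_subset_nonempty { t : Set S | IsIrreducible t ∧ t ⊆ A }
      (fun c hc hcc hne => by
        obtain ⟨t₀, ht₀⟩ := hne
        refine ⟨⋃₀ c, ⟨⟨?_, ?_⟩, ?_⟩, fun s hs => Set.subset_sUnion_of_mem hs⟩
        · exact ((hc ht₀).1.nonempty).mono (Set.subset_sUnion_of_mem ht₀)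
        · rintro u v hu hv ⟨y, hy, hyu⟩ ⟨x, hx, hxv⟩
          obtain ⟨p, hpc, hyp⟩ := Set.mem_sUnion.1 hy
          obtain ⟨q, hqc, hxq⟩ := Set.mem_sUnion.1 hx
          rcases hcc.total hpc hqc with hpq | hqp
          · obtain ⟨x, hxp, hxuv⟩ :=
              (hc hqc).1.2 u v hu hv ⟨y, hpq hyp, hyu⟩ ⟨x, hxq, hxv⟩
            exact ⟨x, Set.mem_sUnion_of_mem hxp hqc, hxuv⟩
          · obtain ⟨x, hxp, hxuv⟩ :=
              (hc hpc).1.2 u v hu hv ⟨y, hyp, hyu⟩ ⟨x, hqp hxq, hxv⟩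
            exact ⟨x, Set.mem_sUnion_of_mem hxp hpc, hxuv⟩
        · exact Set.sUnion_subset fun s hs => (hc hs).2)
      C ⟨hC, hCA⟩
  exact ⟨m, hCm, hm⟩

/-- Theorem 7.4(1) of the paper, abstracted: `S` an irreducible variety with
dimension function `dim`, `V ⊆ W` and `Z` irreducible subvarieties, such that
every irreducible component `Z'` of `Z ∩ W` has dimension
`dim Z + dim W - dim S` (typical intersection).  If `C` is an irreducible
component of `Z ∩ V` with `codim_Z C < codim_S V`, then there is an
irreducible component `Z'` of `Z ∩ W` such that `C` is an irreducible
component of `Z' ∩ V` and `codim_{Z'} C < codim_W V`. -/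
theorem atypical_component_descends
    {S : Type*} [TopologicalSpace S] (dim : Set S → ℤ)
    (hmono : ∀ A B : Set S, A ⊆ B → dim A ≤ dim B)
    (W V Z : Set S) (hVW : V ⊆ W)
    (hV : IsIrreducible V) (hW : IsIrreducible W) (hZ : IsIrreducible Z)
    (htyp : ∀ Z', Maximal (fun t => IsIrreducible t ∧ t ⊆ Z ∩ W) Z' →
      dim Z' = dim Z + dim W - dim (Set.univ : Set S))
    (C : Set S) (hC : Maximal (fun t => IsIrreducible t ∧ t ⊆ Z ∩ V) C)
    (hcodim : dim Z - dim C < dim (Set.univ : Set S) - dim V) :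
    ∃ Z', Maximal (fun t => IsIrreducible t ∧ t ⊆ Z ∩ W) Z' ∧
      Maximal (fun t => IsIrreducible t ∧ t ⊆ Z' ∩ V) C ∧
      dim Z' - dim C < dim W - dim V := by
  have hCZW : C ⊆ Z ∩ W :=
    hC.prop.2.trans (Set.inter_subset_inter_right Z hVW)
  obtain ⟨Z', hCZ', hZ'⟩ :=
    exists_maximal_irreducible_subset (Z ∩ W) C hC.prop.1 hCZW
  refine ⟨Z', hZ', ?_, ?_⟩
  · refine ⟨⟨hC.prop.1, Set.subset_inter hCZ' (hC.prop.2.trans Set.inter_subset_right)⟩, ?_⟩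
    intro t ht hCt
    exact hC.le_of_ge ⟨ht.1, (Set.subset_inter ((ht.2.trans Set.inter_subset_left).trans
      (hZ'.prop.2.trans Set.inter_subset_left)) (ht.2.trans Set.inter_subset_right))⟩ hCt
  · have := htyp Z' hZ'
    omega
end

section
/- Let S be an irreducible variety, W ⊆ S and V ⊆ W irreducible subvarieties, and Z ⊆ S an irreducible subvariety such that every irreducible component of Z ∩ W has dimension dim(Z) + dim(W) − dim(S). Let Z' be an irreducible component of Z ∩ W and C' an irreducible component of Z' ∩ V with codim_{Z'}(C') < codim_W(V). Then there exists an irreducible component C of Z ∩ V with C' ⊆ C and codim_Z(C) < codim_S(V). -/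
lemma exists_maximal_irred {X : Type*} [TopologicalSpace X] (A s : Set X)
    (H : IsIrreducible s) (hsA : s ⊆ A) :
    ∃ t, Maximal (fun t => IsIrreducible t ∧ t ⊆ A) t ∧ s ⊆ t := by
  obtain ⟨m, hsm, hm⟩ :=
    zorn_subset_nonempty { t : Set X | IsPreirreducible t ∧ t ⊆ A }
      (fun c hc hcc _ =>
        ⟨⋃₀ c, ⟨fun u v hu hv ⟨y, hy, hyu⟩ ⟨x, hx, hxv⟩ =>
          let ⟨p, hpc, hyp⟩ := Set.mem_sUnion.1 hy
          let ⟨q, hqc, hxq⟩ := Set.mem_sUnion.1 hx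
          Or.casesOn (hcc.total hpc hqc)
            (fun hpq : p ⊆ q =>
              let ⟨x, hxp, hxuv⟩ := (hc hqc).1 u v hu hv ⟨y, hpq hyp, hyu⟩ ⟨x, hxq, hxv⟩
              ⟨x, Set.mem_sUnion_of_mem hxp hqc, hxuv⟩)
            fun hqp : q ⊆ p =>
            let ⟨x, hxp, hxuv⟩ := (hc hpc).1 u v hu hv ⟨y, hyp, hyu⟩ ⟨x, hqp hxq, hxv⟩
            ⟨x, Set.mem_sUnion_of_mem hxp hpc, hxuv⟩,
          Set.sUnion_subset fun t ht => (hc ht).2⟩,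
          fun _ hxc => Set.subset_sUnion_of_mem hxc⟩)
      s ⟨H.2, hsA⟩
  refine ⟨m, ⟨⟨⟨H.1.mono hsm, hm.prop.1⟩, hm.prop.2⟩, ?_⟩, hsm⟩
  intro u hu hmu
  exact (hm.eq_of_subset ⟨hu.1.2, hu.2⟩ hmu).ge

/-- Theorem 7.4(2) of the paper, abstracted: `S` an irreducible variety with
dimension function `dim`, `V ⊆ W` and `Z` irreducible subvarieties, such that
every irreducible component of `Z ∩ W` has dimension `dim Z + dim W - dim S`.
If `Z'` is an irreducible component of `Z ∩ W` and `C'` an irreducible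
component of `Z' ∩ V` with `codim_{Z'} C' < codim_W V`, then there is an
irreducible component `C` of `Z ∩ V` with `C' ⊆ C` and
`codim_Z C < codim_S V`. -/
theorem atypical_component_ascends
    {S : Type*} [TopologicalSpace S] (dim : Set S → ℤ)
    (hmono : ∀ A B : Set S, A ⊆ B → dim A ≤ dim B)
    (W V Z : Set S) (hVW : V ⊆ W)
    (hV : IsIrreducible V) (hW : IsIrreducible W) (hZ : IsIrreducible Z)
    (htyp : ∀ Z', Maximal (fun t => IsIrreducible t ∧ t ⊆ Z ∩ W) Z' →
      dim Z' = dim Z + dim W - dim (Set.univ : Set S))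
    (Z' : Set S) (hZ' : Maximal (fun t => IsIrreducible t ∧ t ⊆ Z ∩ W) Z')
    (C' : Set S) (hC' : Maximal (fun t => IsIrreducible t ∧ t ⊆ Z' ∩ V) C')
    (hcodim : dim Z' - dim C' < dim W - dim V) :
    ∃ C, Maximal (fun t => IsIrreducible t ∧ t ⊆ Z ∩ V) C ∧ C' ⊆ C ∧
      dim Z - dim C < dim (Set.univ : Set S) - dim V := by
  have hC'ZV : C' ⊆ Z ∩ V :=
    hC'.prop.2.trans (Set.inter_subset_inter_left V (hZ'.prop.2.trans Set.inter_subset_left))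
  obtain ⟨C, hCmax, hC'C⟩ := exists_maximal_irred (Z ∩ V) C' hC'.prop.1 hC'ZV
  refine ⟨C, hCmax, hC'C, ?_⟩
  have h1 : dim Z' = dim Z + dim W - dim (Set.univ : Set S) := htyp Z' hZ'
  have h2 : dim C' ≤ dim C := hmono _ _ hC'C
  omega
end
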